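/- Let $n \ge 1$ and $0 < \lambda < n$. There exist constants $0 < c \le C$, depending only on $n$ and $\lambda$, such that for every radial, decreasing function $f$ on $\mathbb{R}^n$, i.e. $f(x) = \varphi(|x|)$ with $\varphi$ nonnegative and nonincreasing on $(0,\infty)$, one has $$c\, \sup_{x>0} x^{\lambda - n} \int_0^x \varphi(\rho)\, \rho^{n-1} \ln\left(\frac{x}{\rho}\right) d\rho \;\le\; \|Mf\|_{\mathcal{M}_{1,\lambda}} \;\le\; C\, \sup_{x>0} x^{\lambda - n} \int_0^x \varphi(\rho)\, \rho^{n-1} \ln\left(\frac{x}{\rho}\right) d\rho,$$ where $Mf$ is the Hardy–Littlewood maximal function of $f$. -/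

import Mathlib

open MeasureTheory Set
open scoped ENNReal NNReal

/-- The Hardy–Littlewood maximal function `Mf(x) = sup_{B ∋ x} |B|⁻¹ ∫_B |f|`,
supremum over open balls containing `x`, valued in `ℝ≥0∞`. -/
noncomputable def maximalFn (n : ℕ) (f : EuclideanSpace ℝ (Fin n) → ℝ)
    (x : EuclideanSpace ℝ (Fin n)) : ℝ≥0∞ :=
  ⨆ (z : EuclideanSpace ℝ (Fin n)) (r : ℝ) (_ : 0 < r) (_ : x ∈ Metric.ball z r),
    (volume (Metric.ball z r))⁻¹ * ∫⁻ y in Metric.ball z r, ‖f y‖₊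

/-- The Morrey "norm" of an `ℝ≥0∞`-valued function:
`‖g‖_{M_{1,λ}} = sup_{x ∈ ℝⁿ, r > 0} r^{λ-n} ∫_{B(x,r)} g`. -/
noncomputable def morreyNormE (n : ℕ) (lam : ℝ) (g : EuclideanSpace ℝ (Fin n) → ℝ≥0∞) : ℝ≥0∞ :=
  ⨆ (x : EuclideanSpace ℝ (Fin n)) (r : ℝ) (_ : 0 < r),
    ENNReal.ofReal (r ^ (lam - (n:ℝ))) * ∫⁻ y in Metric.ball x r, g y

/-!
Write `f = φ(|·|)`, `I(t) = ∫₀ᵗ φ(ρ) ρ^{n-1} dρ` (so that `∫_{B(0,t)} f = n |B(0,1)| I(t)`) and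
`S` for the supremum in the theorem.

Lower bound: averaging over `B(0, 2|y|)` gives `Mf(y) ≳ |y|^{-n} I(|y|)`, and in polar coordinates,
after Tonelli, `∫_{B(0,x)} |y|^{-n} I(|y|) dy = n |B(0,1)| ∫₀ˣ I(ρ) dρ/ρ
= n |B(0,1)| ∫₀ˣ φ(ρ) ρ^{n-1} ln(x/ρ) dρ`.

Upper bound: `ln(2t/ρ) ≥ ln 2` for `ρ < t` gives `I(t) ≲ t^{n-λ} S`. A ball `B ∋ y` of radius `r`
either has `r ≤ |y|/4`, and then `f ≤ φ(|y|/2) ≲ |y|^{-n} I(|y|/2)` on `B` by monotonicity, or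
lies in `B(0, 6r)`; in both cases the average of `f` over `B` is `≲ t^{-n} I(t)` for some
`t ≥ |y|/2`. Hence `Mf(y) ≲ S |y|^{-λ}`, and `|y|^{-λ}` has finite Morrey norm since `λ < n`.
-/

open Metric

section PolarCoordinates

variable {E : Type*} [NormedAddCommGroup E] [NormedSpace ℝ E] [MeasurableSpace E] [BorelSpace E]
  [Nontrivial E] [FiniteDimensional ℝ E] (μ : Measure E) [μ.IsAddHaarMeasure] {g : ℝ → ℝ≥0∞}

theorem lintegral_fun_norm_addHaar (hg : Measurable g) :
    ∫⁻ x, g ‖x‖ ∂μ = Module.finrank ℝ E * μ (ball 0 1) *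
      ∫⁻ y in Ioi (0:ℝ), ENNReal.ofReal (y ^ (Module.finrank ℝ E - 1)) * g y :=
  calc
    ∫⁻ x, g ‖x‖ ∂μ = ∫⁻ x : ({(0:E)}ᶜ : Set E), g ‖x.1‖ ∂(μ.comap (↑)) := by
      rw [lintegral_subtype_comap (measurableSet_singleton (0:E)).compl (fun a => g ‖a‖),
        restrict_compl_singleton]
    _ = ∫⁻ p : sphere (0:E) 1 × Ioi (0:ℝ), g p.2.1
        ∂(μ.toSphere.prod (.volumeIoiPow (Module.finrank ℝ E - 1))) := by
      rw [← μ.measurePreserving_homeomorphUnitSphereProd.lintegral_comp_emb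
        (Homeomorph.measurableEmbedding _) (fun p => g p.2.1)]
      simp
    _ = μ.toSphere univ *
        ∫⁻ y : Ioi (0:ℝ), g y.1 ∂(.volumeIoiPow (Module.finrank ℝ E - 1)) := by
      rw [lintegral_prod (fun p : sphere (0:E) 1 × Ioi (0:ℝ) => g p.2.1)
        ((hg.comp (measurable_subtype_coe.comp measurable_snd)).aemeasurable)]
      simp [lintegral_const, mul_comm]
    _ = _ := by
      rw [Measure.toSphere_apply_univ, Measure.volumeIoiPow,
        lintegral_withDensity_eq_lintegral_mul _ (by fun_prop) (by fun_prop)]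
      simp only [Pi.mul_apply]
      rw [lintegral_subtype_comap measurableSet_Ioi
        (fun a : ℝ => ENNReal.ofReal (a ^ (Module.finrank ℝ E - 1)) * g a)]

theorem setLIntegral_ball_fun_norm_addHaar (hg : Measurable g) (R : ℝ) :
    ∫⁻ x in ball 0 R, g ‖x‖ ∂μ = Module.finrank ℝ E * μ (ball 0 1) *
      ∫⁻ y in Ioo 0 R, ENNReal.ofReal (y ^ (Module.finrank ℝ E - 1)) * g y := by
  have h := lintegral_fun_norm_addHaar μ (hg.indicator (measurableSet_Iio (a := R)))
  rw [← lintegral_indicator measurableSet_ball, ← Ioi_inter_Iio, inter_comm,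
    ← Measure.restrict_restrict measurableSet_Iio, ← lintegral_indicator measurableSet_Iio]
  convert h using 3 with x
  · by_cases hx : ‖x‖ < R <;> simp [indicator, hx]
  · ext y
    by_cases hy : y < R <;> simp [indicator, hy]

end PolarCoordinates

theorem lintegral_Ioo_inv {a b : ℝ} (ha : 0 < a) (hab : a ≤ b) :
    ∫⁻ ρ in Ioo a b, ENNReal.ofReal ρ⁻¹ = ENNReal.ofReal (Real.log (b / a)) := by
  have h0 : (0:ℝ) ∉ uIcc a b := by rw [uIcc_of_le hab]; exact fun h => ha.not_ge h.1
  rw [← ofReal_integral_eq_lintegral_ofReal, ← integral_Ioc_eq_integral_Ioo,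
    ← intervalIntegral.integral_of_le hab, integral_inv h0]
  · exact ((intervalIntegral.intervalIntegrable_inv (fun x hx => ne_of_mem_of_not_mem hx h0)
      continuousOn_id).1.mono_set Ioo_subset_Ioc_self)
  · filter_upwards [ae_restrict_mem measurableSet_Ioo] with x hx
    exact inv_nonneg.2 (ha.trans hx.1).le

theorem lintegral_Ioo_rpow {s : ℝ} (hs : -1 < s) {R : ℝ} (hR : 0 ≤ R) :
    ∫⁻ ρ in Ioo 0 R, ENNReal.ofReal (ρ ^ s) = ENNReal.ofReal (R ^ (s + 1) / (s + 1)) := by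
  rw [← ofReal_integral_eq_lintegral_ofReal, ← integral_Ioc_eq_integral_Ioo,
    ← intervalIntegral.integral_of_le hR, integral_rpow (Or.inl hs),
    Real.zero_rpow (by linarith), sub_zero]
  · exact (intervalIntegral.intervalIntegrable_rpow' hs).1.mono_set Ioo_subset_Ioc_self
  · filter_upwards [ae_restrict_mem measurableSet_Ioo] with x hx
    exact Real.rpow_nonneg hx.1.le s

theorem lintegral_Ioo_inv_mul_lintegral {F : ℝ → ℝ≥0∞} (hF : Measurable F) (R : ℝ) :
    ∫⁻ ρ in Ioo 0 R, ENNReal.ofReal ρ⁻¹ * ∫⁻ t in Ioo 0 ρ, F t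
      = ∫⁻ t in Ioo 0 R, ENNReal.ofReal (Real.log (R / t)) * F t := by
  set K : ℝ × ℝ → ℝ≥0∞ := {p | p.2 < p.1}.indicator fun p => ENNReal.ofReal p.1⁻¹ * F p.2
  have hK : Measurable K := (Measurable.indicator (by fun_prop)
    (measurableSet_lt measurable_snd measurable_fst))
  have inner_t : ∀ ρ ∈ Ioo 0 R, ENNReal.ofReal ρ⁻¹ * ∫⁻ t in Ioo 0 ρ, F t
      = ∫⁻ t in Ioo 0 R, K (ρ, t) := by
    intro ρ hρ
    have hKρ : (fun t => K (ρ, t)) = (Iio ρ).indicator fun t => ENNReal.ofReal ρ⁻¹ * F t := by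
      ext t; simp [K, indicator]
    rw [hKρ, lintegral_indicator measurableSet_Iio, Measure.restrict_restrict measurableSet_Iio,
      Iio_inter_Ioo, min_eq_left hρ.2.le, lintegral_const_mul' _ _ ENNReal.ofReal_ne_top]
  have inner_ρ : ∀ t ∈ Ioo 0 R, ∫⁻ ρ in Ioo 0 R, K (ρ, t)
      = ENNReal.ofReal (Real.log (R / t)) * F t := by
    intro t ht
    have hKt : (fun ρ => K (ρ, t)) = (Ioi t).indicator fun ρ => ENNReal.ofReal ρ⁻¹ * F t := by
      ext ρ; simp [K, indicator]
    rw [hKt, lintegral_indicator measurableSet_Ioi, Measure.restrict_restrict measurableSet_Ioi,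
      Ioi_inter_Ioo, max_eq_left ht.1.le, lintegral_mul_const _ (by fun_prop),
      lintegral_Ioo_inv ht.1 ht.2.le]
  calc _ = ∫⁻ ρ in Ioo 0 R, ∫⁻ t in Ioo 0 R, K (ρ, t) :=
        setLIntegral_congr_fun measurableSet_Ioo inner_t
    _ = ∫⁻ t in Ioo 0 R, ∫⁻ ρ in Ioo 0 R, K (ρ, t) := lintegral_lintegral_swap hK.aemeasurable
    _ = _ := setLIntegral_congr_fun measurableSet_Ioo inner_ρ

section Average

variable {α : Type*} [MeasurableSpace α] {μ : Measure α} {s : Set α} {f : α → ℝ≥0∞} {c : ℝ≥0∞}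

theorem inv_mul_setLIntegral_le (h : ∀ᵐ x ∂μ.restrict s, f x ≤ c) :
    (μ s)⁻¹ * ∫⁻ x in s, f x ∂μ ≤ c :=
  calc (μ s)⁻¹ * ∫⁻ x in s, f x ∂μ ≤ (μ s)⁻¹ * (c * μ s) := by
        rw [← setLIntegral_const]; exact mul_le_mul_right (lintegral_mono_ae h) _
    _ = c * ((μ s)⁻¹ * μ s) := by ring
    _ ≤ c := mul_le_of_le_one_right' (ENNReal.inv_mul_le_one _)

theorem le_inv_mul_setLIntegral (h : ∀ᵐ x ∂μ.restrict s, c ≤ f x) (h0 : μ s ≠ 0)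
    (htop : μ s ≠ ⊤) : c ≤ (μ s)⁻¹ * ∫⁻ x in s, f x ∂μ :=
  calc c = (μ s)⁻¹ * (c * μ s) := by
        rw [mul_comm c, ← mul_assoc, ENNReal.inv_mul_cancel h0 htop, one_mul]
    _ ≤ (μ s)⁻¹ * ∫⁻ x in s, f x ∂μ := by
        rw [← setLIntegral_const]; exact mul_le_mul_right (lintegral_mono_ae h) _

end Average

noncomputable def radialMass (n : ℕ) (φ : ℝ → ℝ) (R : ℝ) : ℝ≥0∞ :=
  ∫⁻ ρ in Ioo 0 R, ENNReal.ofReal (φ ρ * ρ ^ (n - 1))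

noncomputable def logMass (n : ℕ) (φ : ℝ → ℝ) (x : ℝ) : ℝ≥0∞ :=
  ∫⁻ ρ in Ioo 0 x, ENNReal.ofReal (φ ρ * ρ ^ (n - 1) * Real.log (x / ρ))

noncomputable def logMorrey (n : ℕ) (lam : ℝ) (φ : ℝ → ℝ) : ℝ≥0∞ :=
  ⨆ (x : ℝ) (_ : 0 < x), ENNReal.ofReal (x ^ (lam - (n:ℝ))) * logMass n φ x

theorem radialMass_mono (n : ℕ) (φ : ℝ → ℝ) : Monotone (radialMass n φ) := fun _ _ hab =>
  lintegral_mono' (Measure.restrict_mono (Ioo_subset_Ioo_right hab) le_rfl) le_rfl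

theorem ofReal_log_two_mul_radialMass_le_logMass (n : ℕ) (φ : ℝ → ℝ) {t : ℝ} (ht : 0 ≤ t) :
    ENNReal.ofReal (Real.log 2) * radialMass n φ t ≤ logMass n φ (2 * t) := by
  rw [radialMass, ← lintegral_const_mul' _ _ ENNReal.ofReal_ne_top]
  refine (setLIntegral_mono' measurableSet_Ioo fun ρ hρ => ?_).trans
    (lintegral_mono' (Measure.restrict_mono (Ioo_subset_Ioo_right (by linarith)) le_rfl) le_rfl)
  have hlog : Real.log 2 ≤ Real.log (2 * t / ρ) :=
    Real.log_le_log two_pos (by rw [le_div_iff₀ hρ.1]; linarith [hρ.2])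
  rw [mul_comm, ENNReal.ofReal_mul' ((Real.log_nonneg one_le_two).trans hlog)]
  gcongr

theorem ofReal_mul_radialMass_le_logMorrey (n : ℕ) (lam : ℝ) (φ : ℝ → ℝ) {t : ℝ} (ht : 0 < t) :
    ENNReal.ofReal (Real.log 2 * (2 * t) ^ (lam - n)) * radialMass n φ t ≤ logMorrey n lam φ :=
  calc ENNReal.ofReal (Real.log 2 * (2 * t) ^ (lam - n)) * radialMass n φ t
      = ENNReal.ofReal ((2 * t) ^ (lam - n)) *
          (ENNReal.ofReal (Real.log 2) * radialMass n φ t) := by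
        rw [ENNReal.ofReal_mul (Real.log_nonneg one_le_two), mul_comm (ENNReal.ofReal _),
          mul_assoc]
    _ ≤ ENNReal.ofReal ((2 * t) ^ (lam - n)) * logMass n φ (2 * t) := by
        gcongr; exact ofReal_log_two_mul_radialMass_le_logMass n φ ht.le
    _ ≤ logMorrey n lam φ := le_iSup₂_of_le (2 * t) (by positivity) le_rfl

theorem ofReal_div_pow_mul_radialMass_le_logMorrey (n : ℕ) {lam : ℝ} (hlam : 0 ≤ lam) (φ : ℝ → ℝ)
    {s t : ℝ} (hs : 0 < s) (hst : s ≤ 2 * t) :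
    ENNReal.ofReal (n / t ^ n) * radialMass n φ t
      ≤ ENNReal.ofReal (n * 2 ^ n / Real.log 2 * s ^ (-lam)) * logMorrey n lam φ := by
  have ht : 0 < 2 * t := hs.trans_le hst
  have hsplit : (n / t ^ n : ℝ)
      = n * 2 ^ n / Real.log 2 * (2 * t) ^ (-lam) * (Real.log 2 * (2 * t) ^ (lam - n)) := by
    have hpow : (2 * t) ^ (-lam) * (2 * t) ^ (lam - n) = ((2 * t) ^ n)⁻¹ := by
      rw [← Real.rpow_add ht, show -lam + (lam - n) = -(n : ℝ) by ring, Real.rpow_neg ht.le,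
        Real.rpow_natCast]
    have hlog : Real.log 2 ≠ 0 := (Real.log_pos one_lt_two).ne'
    rw [mul_assoc, mul_left_comm _ (Real.log 2), hpow, mul_pow]
    field_simp
  calc ENNReal.ofReal (n / t ^ n) * radialMass n φ t
      = ENNReal.ofReal (n * 2 ^ n / Real.log 2 * (2 * t) ^ (-lam)) *
          (ENNReal.ofReal (Real.log 2 * (2 * t) ^ (lam - n)) * radialMass n φ t) := by
        rw [hsplit, ENNReal.ofReal_mul (by positivity), mul_assoc]
    _ ≤ ENNReal.ofReal (n * 2 ^ n / Real.log 2 * s ^ (-lam)) * logMorrey n lam φ := by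
        refine mul_le_mul' (ENNReal.ofReal_le_ofReal ?_)
          (ofReal_mul_radialMass_le_logMorrey n lam φ (by linarith))
        exact mul_le_mul_of_nonneg_left
          (Real.rpow_le_rpow_of_nonpos hs hst (neg_nonpos.2 hlam)) (by positivity)

section Euclidean

variable {n : ℕ} {φ : ℝ → ℝ}

theorem ball_average_le_of_four_mul_le_norm (hφ : AntitoneOn φ (Ioi 0))
    {z y : EuclideanSpace ℝ (Fin n)} {r : ℝ} (hr : 0 < r) (hy : y ∈ ball z r)
    (hfar : 4 * r ≤ ‖y‖) :
    (volume (ball z r))⁻¹ * ∫⁻ w in ball z r, ENNReal.ofReal (φ ‖w‖)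
      ≤ ENNReal.ofReal (φ (‖y‖ / 2)) := by
  refine inv_mul_setLIntegral_le ?_
  filter_upwards [ae_restrict_mem measurableSet_ball] with w hw
  have hyw := norm_sub_norm_le y w
  rw [← dist_eq_norm, dist_comm] at hyw
  have hwy := dist_triangle_right w y z
  rw [mem_ball] at hw hy
  exact ENNReal.ofReal_le_ofReal (hφ (show 0 < ‖y‖ / 2 by linarith)
    (show (0:ℝ) < ‖w‖ by linarith) (by linarith))

variable [NeZero n]

theorem setLIntegral_ball_norm_euclidean {g : ℝ → ℝ≥0∞} (hg : Measurable g) (R : ℝ) :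
    ∫⁻ y in ball (0 : EuclideanSpace ℝ (Fin n)) R, g ‖y‖
      = n * volume (ball (0 : EuclideanSpace ℝ (Fin n)) 1) *
          ∫⁻ ρ in Ioo 0 R, ENNReal.ofReal (ρ ^ (n - 1)) * g ρ := by
  simpa only [finrank_euclideanSpace_fin] using
    setLIntegral_ball_fun_norm_addHaar (volume : Measure (EuclideanSpace ℝ (Fin n))) hg R

theorem setLIntegral_ball_radial (hφ : Measurable φ) (R : ℝ) :
    ∫⁻ y in ball (0 : EuclideanSpace ℝ (Fin n)) R, ENNReal.ofReal (φ ‖y‖)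
      = n * volume (ball (0 : EuclideanSpace ℝ (Fin n)) 1) * radialMass n φ R := by
  rw [setLIntegral_ball_norm_euclidean (g := fun ρ => ENNReal.ofReal (φ ρ)) (by fun_prop),
    radialMass]
  congr 1
  refine setLIntegral_congr_fun measurableSet_Ioo fun ρ hρ => ?_
  rw [mul_comm, ENNReal.ofReal_mul' (pow_nonneg hρ.1.le _)]

theorem ball_average_radial (hφ : Measurable φ) {R : ℝ} (hR : 0 < R) :
    (volume (ball (0 : EuclideanSpace ℝ (Fin n)) R))⁻¹ *
        ∫⁻ y in ball (0 : EuclideanSpace ℝ (Fin n)) R, ENNReal.ofReal (φ ‖y‖)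
      = ENNReal.ofReal (n / R ^ n) * radialMass n φ R := by
  set ω := volume (ball (0 : EuclideanSpace ℝ (Fin n)) 1)
  have hω0 : ω ≠ 0 := (measure_ball_pos _ _ one_pos).ne'
  have hωtop : ω ≠ ⊤ := measure_ball_lt_top.ne
  have hvol : volume (ball (0 : EuclideanSpace ℝ (Fin n)) R) = ENNReal.ofReal (R ^ n) * ω := by
    simpa only [finrank_euclideanSpace_fin] using
      Measure.addHaar_ball (volume : Measure (EuclideanSpace ℝ (Fin n))) 0 hR.le
  rw [setLIntegral_ball_radial hφ, hvol, ENNReal.mul_inv (Or.inr hωtop) (Or.inr hω0),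
    ENNReal.ofReal_div_of_pos (by positivity), ENNReal.ofReal_natCast, div_eq_mul_inv]
  calc (ENNReal.ofReal (R ^ n))⁻¹ * ω⁻¹ * (n * ω * radialMass n φ R)
      = n * (ENNReal.ofReal (R ^ n))⁻¹ * radialMass n φ R * (ω⁻¹ * ω) := by ring
    _ = n * (ENNReal.ofReal (R ^ n))⁻¹ * radialMass n φ R := by
      rw [ENNReal.inv_mul_cancel hω0 hωtop, mul_one]

theorem setLIntegral_ball_inv_pow_mul_radialMass (hφ : Measurable φ) (R : ℝ) :
    ∫⁻ y in ball (0 : EuclideanSpace ℝ (Fin n)) R,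
        ENNReal.ofReal (‖y‖ ^ n)⁻¹ * radialMass n φ ‖y‖
      = n * volume (ball (0 : EuclideanSpace ℝ (Fin n)) 1) * logMass n φ R := by
  have hmeas : Measurable fun ρ : ℝ => ENNReal.ofReal (ρ ^ n)⁻¹ * radialMass n φ ρ :=
    (by fun_prop : Measurable fun ρ : ℝ => ENNReal.ofReal (ρ ^ n)⁻¹).mul
      (radialMass_mono n φ).measurable
  rw [setLIntegral_ball_norm_euclidean hmeas]
  congr 1
  calc ∫⁻ ρ in Ioo 0 R, ENNReal.ofReal (ρ ^ (n - 1)) *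
          (ENNReal.ofReal (ρ ^ n)⁻¹ * radialMass n φ ρ)
      = ∫⁻ ρ in Ioo 0 R, ENNReal.ofReal ρ⁻¹ *
          ∫⁻ t in Ioo 0 ρ, ENNReal.ofReal (φ t * t ^ (n - 1)) := by
        refine setLIntegral_congr_fun measurableSet_Ioo fun ρ hρ => ?_
        rw [← mul_assoc, ← ENNReal.ofReal_mul (pow_nonneg hρ.1.le _), radialMass,
          ← pow_sub_one_mul (NeZero.ne n), mul_inv, ← mul_assoc,
          mul_inv_cancel₀ (pow_ne_zero _ hρ.1.ne'), one_mul]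
    _ = ∫⁻ t in Ioo 0 R, ENNReal.ofReal (Real.log (R / t)) *
          ENNReal.ofReal (φ t * t ^ (n - 1)) := lintegral_Ioo_inv_mul_lintegral (by fun_prop) R
    _ = logMass n φ R := by
        refine setLIntegral_congr_fun measurableSet_Ioo fun t ht => ?_
        rw [mul_comm, ← ENNReal.ofReal_mul'
          (Real.log_nonneg ((one_le_div ht.1).2 ht.2.le))]

theorem le_maximalFn (hφ : Measurable φ) {y : EuclideanSpace ℝ (Fin n)} (hy : y ≠ 0) :
    ENNReal.ofReal (n / 2 ^ n) * (ENNReal.ofReal (‖y‖ ^ n)⁻¹ * radialMass n φ ‖y‖)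
      ≤ maximalFn n (fun x => φ ‖x‖) y := by
  have hy0 : 0 < ‖y‖ := norm_pos_iff.2 hy
  have hr : 0 < 2 * ‖y‖ := by positivity
  have hmem : y ∈ ball (0 : EuclideanSpace ℝ (Fin n)) (2 * ‖y‖) := by
    rw [mem_ball_zero_iff]; linarith
  calc ENNReal.ofReal (n / 2 ^ n) * (ENNReal.ofReal (‖y‖ ^ n)⁻¹ * radialMass n φ ‖y‖)
      = ENNReal.ofReal (n / (2 * ‖y‖) ^ n) * radialMass n φ ‖y‖ := by
        rw [← mul_assoc, ← ENNReal.ofReal_mul (by positivity), mul_pow, div_mul_eq_div_div,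
          div_eq_mul_inv _ (‖y‖ ^ n)]
    _ ≤ ENNReal.ofReal (n / (2 * ‖y‖) ^ n) * radialMass n φ (2 * ‖y‖) := by
        gcongr; exact radialMass_mono n φ (by linarith)
    _ = (volume (ball (0 : EuclideanSpace ℝ (Fin n)) (2 * ‖y‖)))⁻¹ *
          ∫⁻ w in ball 0 (2 * ‖y‖), ENNReal.ofReal (φ ‖w‖) :=
        (ball_average_radial hφ hr).symm
    _ ≤ (volume (ball (0 : EuclideanSpace ℝ (Fin n)) (2 * ‖y‖)))⁻¹ *
          ∫⁻ w in ball (0 : EuclideanSpace ℝ (Fin n)) (2 * ‖y‖), ‖φ ‖w‖‖₊ := by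
        gcongr with w; exact Real.ofReal_le_enorm _
    _ ≤ maximalFn n (fun x => φ ‖x‖) y :=
        le_iSup₂_of_le 0 (2 * ‖y‖) (le_iSup₂_of_le hr hmem le_rfl)

theorem ofReal_le_div_pow_mul_radialMass (hφm : Measurable φ) (hφ : AntitoneOn φ (Ioi 0))
    {s : ℝ} (hs : 0 < s) :
    ENNReal.ofReal (φ s) ≤ ENNReal.ofReal (n / s ^ n) * radialMass n φ s := by
  rw [← ball_average_radial (n := n) hφm hs]
  refine le_inv_mul_setLIntegral ?_ (measure_ball_pos _ _ hs).ne' measure_ball_lt_top.ne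
  filter_upwards [ae_restrict_mem measurableSet_ball, Measure.ae_ne _ 0] with y hy hy0
  exact ENNReal.ofReal_le_ofReal
    (hφ (norm_pos_iff.2 hy0) hs (by rw [mem_ball_zero_iff] at hy; exact hy.le))

theorem ball_average_le_of_norm_lt_four_mul (hφm : Measurable φ)
    {z y : EuclideanSpace ℝ (Fin n)} {r : ℝ} (hr : 0 < r) (hy : y ∈ ball z r)
    (hnear : ‖y‖ < 4 * r) :
    (volume (ball z r))⁻¹ * ∫⁻ w in ball z r, ENNReal.ofReal (φ ‖w‖)
      ≤ ENNReal.ofReal (6 ^ n) *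
          (ENNReal.ofReal (n / (6 * r) ^ n) * radialMass n φ (6 * r)) := by
  have hsub : ball z r ⊆ ball (0 : EuclideanSpace ℝ (Fin n)) (6 * r) := fun w hw => by
    have hwy := norm_sub_norm_le w y
    rw [← dist_eq_norm] at hwy
    rw [mem_ball_zero_iff]
    linarith [dist_triangle_right w y z, mem_ball.1 hw, mem_ball.1 hy]
  have hvol : volume (ball (0 : EuclideanSpace ℝ (Fin n)) (6 * r))
      = ENNReal.ofReal (6 ^ n) * volume (ball z r) := by
    rw [Measure.addHaar_ball_mul _ _ (by norm_num), Measure.addHaar_ball_center _ z,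
      finrank_euclideanSpace_fin]
  have h6 : ENNReal.ofReal (6 ^ n) ≠ 0 := (ENNReal.ofReal_pos.2 (by positivity)).ne'
  calc (volume (ball z r))⁻¹ * ∫⁻ w in ball z r, ENNReal.ofReal (φ ‖w‖)
      ≤ (volume (ball z r))⁻¹ *
          ∫⁻ w in ball (0 : EuclideanSpace ℝ (Fin n)) (6 * r), ENNReal.ofReal (φ ‖w‖) := by
        gcongr
    _ = ENNReal.ofReal (6 ^ n) *
          ((volume (ball (0 : EuclideanSpace ℝ (Fin n)) (6 * r)))⁻¹ *
            ∫⁻ w in ball (0 : EuclideanSpace ℝ (Fin n)) (6 * r), ENNReal.ofReal (φ ‖w‖)) := by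
        rw [hvol, ENNReal.mul_inv (Or.inl h6) (Or.inl ENNReal.ofReal_ne_top), ← mul_assoc,
          ← mul_assoc, ENNReal.mul_inv_cancel h6 ENNReal.ofReal_ne_top, one_mul]
    _ = _ := by rw [ball_average_radial hφm (by positivity)]

theorem ball_average_le (hφm : Measurable φ) (hφ : AntitoneOn φ (Ioi 0)) {lam : ℝ}
    (hlam : 0 ≤ lam) {z y : EuclideanSpace ℝ (Fin n)} {r : ℝ} (hr : 0 < r) (hy : y ∈ ball z r)
    (hy0 : y ≠ 0) :
    (volume (ball z r))⁻¹ * ∫⁻ w in ball z r, ENNReal.ofReal (φ ‖w‖)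
      ≤ ENNReal.ofReal (6 ^ n * (n * 2 ^ n / Real.log 2 * ‖y‖ ^ (-lam))) *
          logMorrey n lam φ := by
  have hy' : 0 < ‖y‖ := norm_pos_iff.2 hy0
  rcases le_or_gt (4 * r) ‖y‖ with hfar | hnear
  · calc _ ≤ ENNReal.ofReal (φ (‖y‖ / 2)) :=
          ball_average_le_of_four_mul_le_norm hφ hr hy hfar
      _ ≤ ENNReal.ofReal (n / (‖y‖ / 2) ^ n) * radialMass n φ (‖y‖ / 2) :=
          ofReal_le_div_pow_mul_radialMass hφm hφ (by positivity)
      _ ≤ ENNReal.ofReal (n * 2 ^ n / Real.log 2 * ‖y‖ ^ (-lam)) * logMorrey n lam φ :=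
          ofReal_div_pow_mul_radialMass_le_logMorrey n hlam φ hy' (by linarith)
      _ ≤ _ := mul_le_mul_left (ENNReal.ofReal_le_ofReal
          (le_mul_of_one_le_left (by positivity) (one_le_pow₀ (by norm_num)))) _
  · calc _ ≤ _ := ball_average_le_of_norm_lt_four_mul hφm hr hy hnear
      _ ≤ ENNReal.ofReal (6 ^ n) *
            (ENNReal.ofReal (n * 2 ^ n / Real.log 2 * ‖y‖ ^ (-lam)) * logMorrey n lam φ) :=
          mul_le_mul_right
            (ofReal_div_pow_mul_radialMass_le_logMorrey n hlam φ hy' (by linarith)) _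
      _ = _ := by rw [ENNReal.ofReal_mul (p := 6 ^ n) (by positivity), mul_assoc]

theorem maximalFn_le (hφm : Measurable φ) (hφ0 : ∀ ρ, 0 ≤ φ ρ) (hφ : AntitoneOn φ (Ioi 0))
    {lam : ℝ} (hlam : 0 ≤ lam) {y : EuclideanSpace ℝ (Fin n)} (hy0 : y ≠ 0) :
    maximalFn n (fun x => φ ‖x‖) y
      ≤ ENNReal.ofReal (6 ^ n * (n * 2 ^ n / Real.log 2 * ‖y‖ ^ (-lam))) *
          logMorrey n lam φ := by
  refine iSup_le fun z => iSup₂_le fun r hr => iSup_le fun hy => ?_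
  simp only [← enorm_eq_nnnorm, Real.enorm_eq_ofReal (hφ0 _)]
  exact ball_average_le hφm hφ hlam hr hy hy0

end Euclidean

section Morrey

variable {n : ℕ} {lam : ℝ} {g h : EuclideanSpace ℝ (Fin n) → ℝ≥0∞}

theorem morreyNormE_mono_ae (hgh : ∀ᵐ y, g y ≤ h y) :
    morreyNormE n lam g ≤ morreyNormE n lam h :=
  iSup_mono fun _ => iSup₂_mono fun _ _ =>
    mul_le_mul_right (lintegral_mono_ae (ae_restrict_of_ae hgh)) _

theorem morreyNormE_const_mul (c : ℝ≥0∞) (hg : Measurable g) :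
    morreyNormE n lam (fun y => c * g y) = c * morreyNormE n lam g := by
  simp only [morreyNormE, ENNReal.mul_iSup, lintegral_const_mul c hg, mul_left_comm c]

variable [NeZero n]

theorem setLIntegral_ball_norm_rpow_neg (hlam : lam < n) {R : ℝ} (hR : 0 ≤ R) :
    ∫⁻ y in ball (0 : EuclideanSpace ℝ (Fin n)) R, ENNReal.ofReal (‖y‖ ^ (-lam))
      = n * volume (ball (0 : EuclideanSpace ℝ (Fin n)) 1) *
          ENNReal.ofReal (R ^ ((n : ℝ) - lam) / (n - lam)) := by
  rw [setLIntegral_ball_norm_euclidean (g := fun ρ => ENNReal.ofReal (ρ ^ (-lam)))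
    (by fun_prop)]
  congr 1
  have hexp : (n : ℝ) - lam = (n - 1 - lam) + 1 := by ring
  rw [hexp, ← lintegral_Ioo_rpow (by linarith) hR]
  refine setLIntegral_congr_fun measurableSet_Ioo fun ρ hρ => ?_
  rw [← ENNReal.ofReal_mul (pow_nonneg hρ.1.le _), ← Real.rpow_natCast, ← Real.rpow_add hρ.1,
    Nat.cast_pred (Nat.pos_of_neZero n)]
  ring_nf

theorem ofReal_rpow_mul_setLIntegral_norm_rpow_neg_le_of_far (hlam0 : 0 ≤ lam)
    {x : EuclideanSpace ℝ (Fin n)} {r : ℝ} (hr : 0 < r) (hfar : 2 * r ≤ ‖x‖) :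
    ENNReal.ofReal (r ^ (lam - n)) * ∫⁻ y in ball x r, ENNReal.ofReal (‖y‖ ^ (-lam))
      ≤ volume (ball (0 : EuclideanSpace ℝ (Fin n)) 1) := by
  set ω := volume (ball (0 : EuclideanSpace ℝ (Fin n)) 1)
  have hvol : volume (ball x r) = ENNReal.ofReal (r ^ n) * ω := by
    simpa only [finrank_euclideanSpace_fin] using
      Measure.addHaar_ball (volume : Measure (EuclideanSpace ℝ (Fin n))) x hr.le
  have hbound : ∫⁻ y in ball x r, ENNReal.ofReal (‖y‖ ^ (-lam))
      ≤ ENNReal.ofReal (r ^ (-lam)) * (ENNReal.ofReal (r ^ n) * ω) := by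
    rw [← hvol, ← setLIntegral_const]
    refine setLIntegral_mono' measurableSet_ball fun y hy => ENNReal.ofReal_le_ofReal ?_
    have hxy := norm_sub_norm_le x y
    rw [← dist_eq_norm, dist_comm] at hxy
    exact Real.rpow_le_rpow_of_nonpos hr (by linarith [mem_ball.1 hy]) (neg_nonpos.2 hlam0)
  calc ENNReal.ofReal (r ^ (lam - n)) * ∫⁻ y in ball x r, ENNReal.ofReal (‖y‖ ^ (-lam))
      ≤ ENNReal.ofReal (r ^ (lam - n) * r ^ (-lam) * r ^ n) * ω := by
        rw [ENNReal.ofReal_mul (by positivity), ENNReal.ofReal_mul (by positivity), mul_assoc,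
          mul_assoc]
        exact mul_le_mul_right hbound _
    _ = ω := by
        rw [← Real.rpow_natCast, ← Real.rpow_add hr, ← Real.rpow_add hr,
          show lam - n + -lam + n = (0 : ℝ) by ring, Real.rpow_zero, ENNReal.ofReal_one, one_mul]

theorem ofReal_rpow_mul_setLIntegral_norm_rpow_neg_le_of_near (hlam : lam < n)
    {x : EuclideanSpace ℝ (Fin n)} {r : ℝ} (hr : 0 < r) (hnear : ‖x‖ < 2 * r) :
    ENNReal.ofReal (r ^ (lam - n)) * ∫⁻ y in ball x r, ENNReal.ofReal (‖y‖ ^ (-lam))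
      ≤ volume (ball (0 : EuclideanSpace ℝ (Fin n)) 1) *
          ENNReal.ofReal (n * 3 ^ ((n : ℝ) - lam) / (n - lam)) := by
  have hsub : ball x r ⊆ ball (0 : EuclideanSpace ℝ (Fin n)) (3 * r) := fun y hy => by
    have hyx := norm_sub_norm_le y x
    rw [← dist_eq_norm] at hyx
    rw [mem_ball_zero_iff]; linarith [mem_ball.1 hy]
  have hscale : r ^ (lam - n) * ((3 * r) ^ ((n : ℝ) - lam) / (n - lam))
      = 3 ^ ((n : ℝ) - lam) / (n - lam) := by
    have hcancel : r ^ (lam - n) * r ^ ((n : ℝ) - lam) = 1 := by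
      rw [← Real.rpow_add hr, show lam - n + (n - lam) = (0 : ℝ) by ring, Real.rpow_zero]
    rw [Real.mul_rpow (by norm_num) hr.le]
    linear_combination 3 ^ ((n : ℝ) - lam) / (n - lam) * hcancel
  calc ENNReal.ofReal (r ^ (lam - n)) * ∫⁻ y in ball x r, ENNReal.ofReal (‖y‖ ^ (-lam))
      ≤ ENNReal.ofReal (r ^ (lam - n)) *
          ∫⁻ y in ball (0 : EuclideanSpace ℝ (Fin n)) (3 * r),
            ENNReal.ofReal (‖y‖ ^ (-lam)) := by
        gcongr
    _ = _ := by
        rw [setLIntegral_ball_norm_rpow_neg hlam (by positivity), ← ENNReal.ofReal_natCast,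
          mul_div_assoc, ENNReal.ofReal_mul (Nat.cast_nonneg n), ← hscale,
          ENNReal.ofReal_mul (by positivity)]
        ring

theorem morreyNormE_norm_rpow_neg_lt_top (hlam0 : 0 ≤ lam) (hlam : lam < n) :
    morreyNormE n lam (fun y => ENNReal.ofReal (‖y‖ ^ (-lam))) < ⊤ := by
  set K := (n : ℝ) * 3 ^ ((n : ℝ) - lam) / (n - lam)
  have hK : 0 ≤ K := div_nonneg (by positivity) (by linarith)
  calc morreyNormE n lam (fun y => ENNReal.ofReal (‖y‖ ^ (-lam)))
      ≤ volume (ball (0 : EuclideanSpace ℝ (Fin n)) 1) * ENNReal.ofReal (1 + K) := by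
        refine iSup_le fun x => iSup₂_le fun r hr => ?_
        rcases le_or_gt (2 * r) ‖x‖ with hfar | hnear
        · exact (ofReal_rpow_mul_setLIntegral_norm_rpow_neg_le_of_far hlam0 hr hfar).trans
            (le_mul_of_one_le_right' (ENNReal.one_le_ofReal.2 (by linarith)))
        · exact (ofReal_rpow_mul_setLIntegral_norm_rpow_neg_le_of_near hlam hr hnear).trans
            (mul_le_mul_right (ENNReal.ofReal_le_ofReal (by linarith)) _)
    _ < ⊤ := ENNReal.mul_lt_top measure_ball_lt_top ENNReal.ofReal_lt_top

end Morrey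

/-- `φ` is unconstrained on `(-∞, 0]`, so it need not be measurable; `φ ∘ exp ∘ log` is, and
agrees with `φ` on `(0, ∞)`. -/
theorem AntitoneOn.exists_measurable_eqOn_Ioi {φ : ℝ → ℝ} (hφ0 : ∀ ρ ∈ Ioi 0, 0 ≤ φ ρ)
    (hφ : AntitoneOn φ (Ioi 0)) :
    ∃ ψ : ℝ → ℝ, Measurable ψ ∧ (∀ ρ, 0 ≤ ψ ρ) ∧ AntitoneOn ψ (Ioi 0) ∧ EqOn ψ φ (Ioi 0) := by
  have hψφ : EqOn (fun ρ => φ (Real.exp (Real.log ρ))) φ (Ioi 0) := fun ρ hρ => by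
    simp only [Real.exp_log hρ]
  have hanti : Antitone fun t => φ (Real.exp t) := fun _ _ hab =>
    hφ (Real.exp_pos _) (Real.exp_pos _) (Real.exp_le_exp.2 hab)
  exact ⟨_, hanti.measurable.comp Real.measurable_log, fun ρ => hφ0 _ (Real.exp_pos _),
    hφ.congr hψφ.symm, hψφ⟩

theorem logMorrey_congr {n : ℕ} {lam : ℝ} {φ ψ : ℝ → ℝ} (h : EqOn φ ψ (Ioi 0)) :
    logMorrey n lam φ = logMorrey n lam ψ := by
  simp only [logMorrey, logMass]
  refine iSup_congr fun x => iSup_congr fun _ =>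
    congrArg _ (setLIntegral_congr_fun measurableSet_Ioo fun ρ hρ => ?_)
  rw [h hρ.1]

theorem maximalFn_congr_ae {n : ℕ} {f g : EuclideanSpace ℝ (Fin n) → ℝ} (h : f =ᵐ[volume] g) :
    maximalFn n f = maximalFn n g := by
  ext x
  refine iSup_congr fun z => iSup_congr fun r => iSup_congr fun _ => iSup_congr fun _ => ?_
  rw [lintegral_congr_ae (ae_restrict_of_ae (h.mono fun y hy => by rw [hy]))]

section Bounds

variable {n : ℕ} [NeZero n] {lam : ℝ} {φ : ℝ → ℝ}

theorem mul_logMorrey_le_morreyNormE_maximalFn (hφ : Measurable φ) :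
    ENNReal.ofReal (n / 2 ^ n) * (n * volume (ball (0 : EuclideanSpace ℝ (Fin n)) 1)) *
        logMorrey n lam φ
      ≤ morreyNormE n lam (maximalFn n fun x => φ ‖x‖) := by
  simp only [logMorrey, ENNReal.mul_iSup]
  refine iSup₂_le fun x hx => ?_
  calc _ = ENNReal.ofReal (x ^ (lam - n)) * (ENNReal.ofReal (n / 2 ^ n) *
          ∫⁻ y in ball (0 : EuclideanSpace ℝ (Fin n)) x,
            ENNReal.ofReal (‖y‖ ^ n)⁻¹ * radialMass n φ ‖y‖) := by
        rw [setLIntegral_ball_inv_pow_mul_radialMass hφ]; ring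
    _ ≤ ENNReal.ofReal (x ^ (lam - n)) *
          ∫⁻ y in ball (0 : EuclideanSpace ℝ (Fin n)) x, maximalFn n (fun x => φ ‖x‖) y := by
        rw [← lintegral_const_mul' _ _ ENNReal.ofReal_ne_top]
        refine mul_le_mul_right (lintegral_mono_ae ?_) _
        filter_upwards [Measure.ae_ne _ 0] with y hy using le_maximalFn hφ hy
    _ ≤ morreyNormE n lam (maximalFn n fun x => φ ‖x‖) :=
        le_iSup_of_le 0 (le_iSup₂_of_le x hx le_rfl)

theorem morreyNormE_maximalFn_le (hφm : Measurable φ) (hφ0 : ∀ ρ, 0 ≤ φ ρ)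
    (hφ : AntitoneOn φ (Ioi 0)) (hlam : 0 ≤ lam) :
    morreyNormE n lam (maximalFn n fun x => φ ‖x‖)
      ≤ ENNReal.ofReal (6 ^ n * (n * 2 ^ n / Real.log 2)) *
          morreyNormE n lam (fun y => ENNReal.ofReal (‖y‖ ^ (-lam))) * logMorrey n lam φ :=
  calc morreyNormE n lam (maximalFn n fun x => φ ‖x‖)
      ≤ morreyNormE n lam (fun y => ENNReal.ofReal (6 ^ n * (n * 2 ^ n / Real.log 2)) *
          logMorrey n lam φ * ENNReal.ofReal (‖y‖ ^ (-lam))) := by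
        refine morreyNormE_mono_ae ?_
        filter_upwards [Measure.ae_ne volume 0] with y hy
        refine (maximalFn_le hφm hφ0 hφ hlam hy).trans_eq ?_
        rw [← mul_assoc (6 ^ n : ℝ), ENNReal.ofReal_mul (by positivity)]
        ring
    _ = _ := by rw [morreyNormE_const_mul _ (by fun_prop)]; ring

end Bounds

/-- For `n ≥ 1`, `0 < λ < n`, there exist `0 < c ≤ C` (depending only on `n, λ`)
such that for every radial decreasing `f(x) = φ(|x|)` (`φ ≥ 0` nonincreasing on `(0,∞)`),
`c · sup_{x>0} x^{λ-n} ∫_0^x φ(ρ) ρ^{n-1} ln(x/ρ) dρ ≤ ‖Mf‖_{M_{1,λ}}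
  ≤ C · sup_{x>0} x^{λ-n} ∫_0^x φ(ρ) ρ^{n-1} ln(x/ρ) dρ`. -/
theorem statement4 (n : ℕ) (hn : 1 ≤ n) (lam : ℝ) (hlam0 : 0 < lam) (hlamn : lam < n) :
    ∃ c C : ℝ, 0 < c ∧ c ≤ C ∧ ∀ (f : EuclideanSpace ℝ (Fin n) → ℝ) (φ : ℝ → ℝ),
      (∀ ρ ∈ Set.Ioi (0:ℝ), 0 ≤ φ ρ) → AntitoneOn φ (Set.Ioi (0:ℝ)) →
      (∀ x, f x = φ ‖x‖) →
      ENNReal.ofReal c *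
          (⨆ (x : ℝ) (_ : 0 < x), ENNReal.ofReal (x ^ (lam - (n:ℝ))) *
            ∫⁻ ρ in Set.Ioo (0:ℝ) x,
              ENNReal.ofReal (φ ρ * ρ ^ (n - 1) * Real.log (x / ρ)))
        ≤ morreyNormE n lam (maximalFn n f) ∧
      morreyNormE n lam (maximalFn n f)
        ≤ ENNReal.ofReal C *
          ⨆ (x : ℝ) (_ : 0 < x), ENNReal.ofReal (x ^ (lam - (n:ℝ))) *
            ∫⁻ ρ in Set.Ioo (0:ℝ) x,
              ENNReal.ofReal (φ ρ * ρ ^ (n - 1) * Real.log (x / ρ)) := by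
  have : NeZero n := ⟨by omega⟩
  set c := ENNReal.ofReal (n / 2 ^ n) * (n * volume (ball (0 : EuclideanSpace ℝ (Fin n)) 1))
  set C := ENNReal.ofReal (6 ^ n * (n * 2 ^ n / Real.log 2)) *
    morreyNormE n lam (fun y => ENNReal.ofReal (‖y‖ ^ (-lam)))
  have hc0 : c ≠ 0 := mul_ne_zero (ENNReal.ofReal_pos.2 (by positivity)).ne'
    (mul_ne_zero (Nat.cast_ne_zero.2 (NeZero.ne n)) (measure_ball_pos _ _ one_pos).ne')
  have hctop : c ≠ ⊤ := ENNReal.mul_ne_top ENNReal.ofReal_ne_top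
    (ENNReal.mul_ne_top (ENNReal.natCast_ne_top n) measure_ball_lt_top.ne)
  have hCtop : C ≠ ⊤ := ENNReal.mul_ne_top ENNReal.ofReal_ne_top
    (morreyNormE_norm_rpow_neg_lt_top hlam0.le hlamn).ne
  refine ⟨c.toReal, c.toReal + C.toReal, ENNReal.toReal_pos hc0 hctop,
    le_add_of_nonneg_right ENNReal.toReal_nonneg, fun f φ hφ0 hφ hf => ?_⟩
  show ENNReal.ofReal _ * logMorrey n lam φ ≤ _ ∧ _ ≤ ENNReal.ofReal _ * logMorrey n lam φ
  obtain ⟨ψ, hψm, hψ0, hψ, hψφ⟩ := hφ.exists_measurable_eqOn_Ioi hφ0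
  have hMf : maximalFn n f = maximalFn n fun x => ψ ‖x‖ := maximalFn_congr_ae <| by
    filter_upwards [Measure.ae_ne volume 0] with x hx
    rw [hf, hψφ (norm_pos_iff.2 hx)]
  have hC : C ≤ ENNReal.ofReal (c.toReal + C.toReal) :=
    (ENNReal.le_ofReal_iff_toReal_le hCtop (by positivity)).2
      (le_add_of_nonneg_left ENNReal.toReal_nonneg)
  rw [hMf, logMorrey_congr hψφ.symm, ENNReal.ofReal_toReal hctop]
  exact ⟨mul_logMorrey_le_morreyNormE_maximalFn hψm,
    (morreyNormE_maximalFn_le hψm hψ0 hψ hlam0.le).trans (mul_le_mul_left hC _)⟩
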